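/- Let Σ be a finite alphabet and let L ⊆ Σ* be a regular language. If L is well-quasi-ordered by the infix relation, then L is a bounded language. -/

import Mathlib

/-- The `p`-fold concatenation of the word `x`. -/
def wpow {A : Type*} (x : List A) (p : ℕ) : List A := (List.replicate p x).flatten

/-- A subset `L` of words is well-quasi-ordered by the relation `r`. -/
def IsWqoOn {A : Type*} (L : Set (List A)) (r : List A → List A → Prop) : Prop :=
  ∀ f : ℕ → List A, (∀ n, f n ∈ L) → ∃ i j, i < j ∧ r (f i) (f j)

/-- A language is bounded if it is contained in `w₁* ⋯ w_n*` for some words `wᵢ`. -/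
def IsBoundedLang {A : Type*} (L : Set (List A)) : Prop :=
  ∃ (n : ℕ) (w : Fin n → List A), ∀ u ∈ L, ∃ c : Fin n → ℕ,
    u = (List.ofFn fun i : Fin n => wpow (w i) (c i)).flatten

/-- A language is regular if it is accepted by a DFA with finitely many states. -/
def IsRegularLang {A : Type*} (L : Set (List A)) : Prop :=
  ∃ (Q : Type) (_ : Fintype Q) (M : DFA A Q), ∀ u : List A, u ∈ M.accepts ↔ u ∈ L

/-!
Fix a DFA for `L`. If `s` and `t` are loops of the same length at a state `p` that is reachable
by `x` and co-reachable by `y`, then every word `x s tⁿ s y` is accepted. An infix embedding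
between two of them shifts a long block of `t`'s onto another one, so the shift is a period of
the periodic extension of `t`, and it puts one of the copies of `s` inside a block of `t`'s;
hence `s = t`. The loops at `p` thus form a submonoid with at most one word of each length, which
makes it a submonoid of `ρ_p*` for its shortest nonempty word `ρ_p`. Cutting an accepted run at
the last return to each visited state writes every accepted word as a product of at most `|Q|`
factors `ρ_p^c a`, so `L ⊆ (ρ_{q₁}* ⋯ ρ_{qₘ}* a₁* ⋯ aᵣ*)^|Q|`.
-/
open List Computability Language

section

variable {A : Type*}

theorem wpow_succ (x : List A) (n : ℕ) : wpow x (n + 1) = x ++ wpow x n := by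
  simp [wpow, replicate_succ]

@[simp]
theorem length_wpow (x : List A) (n : ℕ) : (wpow x n).length = n * x.length := by
  simp [wpow, length_flatten]

theorem getElem?_wpow (x : List A) {n i : ℕ} (h : i < n * x.length) :
    (wpow x n)[i]? = x[i % x.length]? := by
  induction n generalizing i with
  | zero => simp at h
  | succ n ih =>
    rw [wpow_succ]
    rcases lt_or_ge i x.length with hi | hi
    · rw [getElem?_append_left hi, Nat.mod_eq_of_lt hi]
    · rw [getElem?_append_right hi, ih (by rw [Nat.succ_mul] at h; omega),
        ← Nat.mod_eq_sub_mod hi]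

theorem getElem?_append_length_add (u v : List A) (i : ℕ) : (u ++ v)[u.length + i]? = v[i]? := by
  rw [getElem?_append_right (Nat.le_add_right _ _), Nat.add_sub_cancel_left]

theorem eq_of_infix_of_length_eq {x y s t : List A} {N M : ℕ} (hlen : s.length = t.length)
    (hN : 0 < N) (hM : N + 2 ≤ M)
    (h : x ++ (s ++ (wpow t N ++ (s ++ y))) <:+: x ++ (s ++ (wpow t M ++ (s ++ y)))) : s = t := by
  rcases Nat.eq_zero_or_pos t.length with h0 | hpos
  · rw [length_eq_zero_iff.1 (hlen.trans h0), length_eq_zero_iff.1 h0]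
  obtain ⟨w₁, w₂, h⟩ := h
  set k := w₁.length
  set T : ℕ → Option A := fun m => t[m % t.length]?
  have hTt : Function.Periodic T t.length := fun m => by simp [T]
  have hblock : ∀ n m, m < n * t.length →
      (x ++ (s ++ (wpow t n ++ (s ++ y))))[x.length + (s.length + m)]? = T m := fun n m hm => by
    rw [getElem?_append_length_add, getElem?_append_length_add,
      getElem?_append_left (by simpa using hm), getElem?_wpow _ hm]
  have hshift : ∀ p < (x ++ (s ++ (wpow t N ++ (s ++ y)))).length,
      (x ++ (s ++ (wpow t M ++ (s ++ y))))[k + p]? = (x ++ (s ++ (wpow t N ++ (s ++ y))))[p]? :=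
    fun p hp => by rw [← h, append_assoc, getElem?_append_length_add, getElem?_append_left hp]
  have hk : k + N * t.length ≤ M * t.length := by
    have hlen' := congrArg length h
    simp only [length_append, length_wpow] at hlen'
    omega
  have hNt : t.length ≤ N * t.length := Nat.le_mul_of_pos_left _ hN
  have hgap : N * t.length + 2 * t.length ≤ M * t.length := by nlinarith
  have hTk : Function.Periodic T k := by
    intro m
    have hr := Nat.mod_lt m hpos
    have he := hshift (x.length + (s.length + m % t.length)) (by simp; omega)
    rw [show k + (x.length + (s.length + m % t.length))
        = x.length + (s.length + (k + m % t.length)) by omega,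
      hblock M _ (by omega), hblock N _ (by omega)] at he
    simpa [T, Nat.add_comm k, Nat.add_mod_mod] using he
  -- Depending on `k`, one of the two copies of `s` in the short word lands inside `t ^ M`.
  have hsT : ∀ q < s.length, s[q]? = T q := by
    intro q hq
    rcases le_or_gt t.length k with hkt | hkt
    · have he := hshift (x.length + q) (by simp; omega)
      rw [getElem?_append_length_add, getElem?_append_left hq,
        show k + (x.length + q) = x.length + (s.length + (q + (k - t.length))) by omega,
        hblock M _ (by omega)] at he
      rw [← he, ← hTt, show q + (k - t.length) + t.length = q + k by omega, hTk]
    · have he := hshift (x.length + (s.length + (N * t.length + q))) (by simp; omega)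
      rw [getElem?_append_length_add, getElem?_append_length_add, ← length_wpow t N,
        getElem?_append_length_add, getElem?_append_left hq, length_wpow,
        show k + (x.length + (s.length + (N * t.length + q)))
          = x.length + (s.length + (q + k + N * t.length)) by omega,
        hblock M _ (by omega)] at he
      rw [← he, ← smul_eq_mul, hTt.nsmul, hTk]
  refine ext_getElem? fun q => ?_
  rcases lt_or_ge q s.length with hq | hq
  · rw [hsT q hq, show T q = t[q % t.length]? from rfl, Nat.mod_eq_of_lt (hlen ▸ hq)]
  · rw [getElem?_eq_none hq, getElem?_eq_none (hlen ▸ hq)]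

theorem eq_of_isWqoOn_infix_of_length_eq {L : Set (List A)} (hwqo : IsWqoOn L (· <:+: ·))
    {x y s t : List A} (hlen : s.length = t.length)
    (hmem : ∀ n, x ++ s ++ wpow t n ++ s ++ y ∈ L) : s = t := by
  obtain ⟨i, j, hij, h⟩ := hwqo (fun n => x ++ (s ++ (wpow t (2 * n + 1) ++ (s ++ y))))
    fun n => by simpa using hmem (2 * n + 1)
  exact eq_of_infix_of_length_eq hlen (by omega) (by omega) h

namespace Language

theorem mem_kstar_singleton_iff {w u : List A} :
    u ∈ ({w} : Language A)∗ ↔ ∃ n, u = wpow w n := by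
  rw [mem_kstar]
  constructor
  · rintro ⟨S, rfl, hS⟩
    exact ⟨S.length, by rw [wpow, ← eq_replicate_iff.2 ⟨rfl, hS⟩]⟩
  · rintro ⟨n, rfl⟩
    exact ⟨replicate n w, rfl, fun _ => eq_of_mem_replicate⟩

theorem wpow_mem_kstar_singleton (w : List A) (n : ℕ) : wpow w n ∈ ({w} : Language A)∗ :=
  mem_kstar_singleton_iff.2 ⟨n, rfl⟩

def boundedBy (W : List (List A)) : Language A :=
  (W.map fun w => ({w} : Language A)∗).prod

theorem boundedBy_append (W₁ W₂ : List (List A)) :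
    boundedBy (W₁ ++ W₂) = boundedBy W₁ * boundedBy W₂ := by
  simp [boundedBy, prod_append]

theorem boundedBy_flatten_replicate (W : List (List A)) (n : ℕ) :
    boundedBy (replicate n W).flatten = boundedBy W ^ n := by
  induction n with
  | zero => rfl
  | succ n ih => rw [replicate_succ, flatten_cons, boundedBy_append, ih, pow_succ']

theorem one_le_boundedBy (W : List (List A)) : 1 ≤ boundedBy W := by
  induction W with
  | nil => rfl
  | cons w W ih => exact one_le_mul one_le_kstar ih

theorem kstar_le_boundedBy {w : List A} {W : List (List A)} (h : w ∈ W) :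
    ({w} : Language A)∗ ≤ boundedBy W := by
  induction W with
  | nil => cases h
  | cons w' W ih =>
    rcases mem_cons.1 h with rfl | h
    · exact le_mul_of_one_le_right' (one_le_boundedBy W)
    · exact le_mul_of_one_le_left' one_le_kstar |>.trans' (ih h)

theorem exists_eq_flatten_ofFn_of_mem_boundedBy {W : List (List A)} {u : List A}
    (h : u ∈ boundedBy W) :
    ∃ c : Fin W.length → ℕ, u = (ofFn fun i => wpow W[i] (c i)).flatten := by
  induction W generalizing u with
  | nil => exact ⟨Fin.elim0, h⟩
  | cons w W ih =>
    obtain ⟨v, hv, v', hv', rfl⟩ := mem_mul.1 h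
    obtain ⟨n, rfl⟩ := mem_kstar_singleton_iff.1 hv
    obtain ⟨c, rfl⟩ := ih hv'
    exact ⟨Fin.cons n c, by simp [ofFn_succ]⟩

end Language

theorem isBoundedLang_of_forall_mem_boundedBy {L : Set (List A)} (W : List (List A))
    (h : ∀ u ∈ L, u ∈ boundedBy W) : IsBoundedLang L :=
  ⟨W.length, fun i => W[i], fun u hu => exists_eq_flatten_ofFn_of_mem_boundedBy (h u hu)⟩

theorem exists_forall_mem_kstar_of_injOn_length {K : Set (List A)}
    (hmul : ∀ u ∈ K, ∀ v ∈ K, u ++ v ∈ K)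
    (hcancel : ∀ u ∈ K, ∀ v, u ++ v ∈ K → v ∈ K)
    (hinj : Set.InjOn length K) : ∃ ρ : List A, ∀ w ∈ K, w ∈ ({ρ} : Language A)∗ := by
  by_cases hne : ∃ w ∈ K, w ≠ []
  swap
  · push Not at hne
    exact ⟨[], fun w hw => by rw [hne w hw]; exact nil_mem_kstar _⟩
  set S := {w ∈ K | w ≠ []}
  have hS : S.Nonempty := hne
  set ρ := Function.argminOn length S hS
  obtain ⟨hρK, hρne⟩ : ρ ∈ K ∧ ρ ≠ [] := Function.argminOn_mem length S hS
  refine ⟨ρ, fun w hw => ?_⟩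
  induction h : w.length using Nat.strong_induction_on generalizing w with
  | _ n ih =>
  rcases eq_or_ne w [] with rfl | hw0
  · exact nil_mem_kstar _
  have hle : ρ.length ≤ w.length := not_lt.1 (Function.not_lt_argminOn length S ⟨hw, hw0⟩)
  have hcomm : ρ ++ w = w ++ ρ :=
    hinj (hmul _ hρK _ hw) (hmul _ hw _ hρK) (by simp [Nat.add_comm])
  obtain ⟨w', rfl⟩ : ρ <+: w :=
    prefix_of_prefix_length_le (hcomm ▸ prefix_append ρ w) (prefix_append w ρ) hle
  have hw' := ih w'.length (by simp [← h, length_pos_iff.2 hρne]) w' (hcancel _ hρK _ hw) rfl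
  exact mul_kstar_le_kstar (a := ({ρ} : Language A)) (append_mem_mul rfl hw')

namespace DFA

variable {Q : Type*} (M : DFA A Q)

theorem exists_eq_loop_append_avoiding (p : Q) (u : List A) :
    ∃ v w, u = v ++ w ∧ M.evalFrom p v = p ∧
      ∀ w', w' <+: w → w' ≠ [] → M.evalFrom p (v ++ w') ≠ p := by
  induction u using reverseRecOn with
  | nil => exact ⟨[], [], rfl, rfl, fun w' hw' hne => (hne (prefix_nil.1 hw')).elim⟩
  | append_singleton u a ih =>
    obtain ⟨v, w, rfl, hv, hw⟩ := ih
    by_cases hret : M.evalFrom p (v ++ w ++ [a]) = p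
    · exact ⟨v ++ w ++ [a], [], (append_nil _).symm, hret,
        fun w' hw' hne => (hne (prefix_nil.1 hw')).elim⟩
    · refine ⟨v, w ++ [a], append_assoc _ _ _, hv, fun w' hw' hne => ?_⟩
      rcases prefix_concat_iff.1 hw' with rfl | hw'
      · rwa [← append_assoc]
      · exact hw w' hw' hne

theorem length_injOn_loops (hwqo : IsWqoOn M.accepts (· <:+: ·)) {p : Q} {x y : List A}
    (hx : M.evalFrom M.start x = p) (hy : M.evalFrom p y ∈ M.accept) :
    Set.InjOn length {w | M.evalFrom p w = p} := by
  intro s hs t ht hst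
  refine eq_of_isWqoOn_infix_of_length_eq hwqo hst (x := x) (y := y) fun n => ?_
  have ht' := M.evalFrom_of_pow ht (wpow_mem_kstar_singleton t n)
  change M.evalFrom p s = p at hs
  change M.evalFrom M.start _ ∈ M.accept
  rwa [evalFrom_of_append, evalFrom_of_append, evalFrom_of_append, evalFrom_of_append, hx, hs,
    ht', hs]

theorem exists_loops_mem_kstar (hwqo : IsWqoOn M.accepts (· <:+: ·)) (p : Q) :
    ∃ ρ : List A, ∀ x y w, M.evalFrom M.start x = p → M.evalFrom p y ∈ M.accept →
      M.evalFrom p w = p → w ∈ ({ρ} : Language A)∗ := by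
  by_cases huse : ∃ x y, M.evalFrom M.start x = p ∧ M.evalFrom p y ∈ M.accept
  · obtain ⟨x, y, hx, hy⟩ := huse
    obtain ⟨ρ, hρ⟩ := exists_forall_mem_kstar_of_injOn_length (K := {w | M.evalFrom p w = p})
      (fun u hu v hv => by simp_all [evalFrom_of_append])
      (fun u hu v huv => by simp_all [evalFrom_of_append])
      (M.length_injOn_loops hwqo hx hy)
    exact ⟨ρ, fun _ _ w _ _ hw => hρ w hw⟩
  · exact ⟨[], fun x y _ hx hy _ => (huse ⟨x, y, hx, hy⟩).elim⟩

end DFA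

section Slots

variable [Fintype A] {Q : Type*} [Fintype Q] (ρ : Q → List A)

noncomputable def slotWords : List (List A) :=
  Finset.univ.toList.map ρ ++ Finset.univ.toList.map fun a => [a]

theorem mem_boundedBy_slotWords {p : Q} {v : List A} (hv : v ∈ ({ρ p} : Language A)∗) :
    v ∈ boundedBy (slotWords ρ) :=
  kstar_le_boundedBy (by simp [slotWords]) hv

theorem append_singleton_mem_boundedBy_slotWords {p : Q} {v : List A}
    (hv : v ∈ ({ρ p} : Language A)∗) (a : A) : v ++ [a] ∈ boundedBy (slotWords ρ) := by
  rw [slotWords, boundedBy_append]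
  exact append_mem_mul (kstar_le_boundedBy (by simp) hv)
    (kstar_le_boundedBy (by simp) (le_kstar (a := ({[a]} : Language A)) rfl))

theorem DFA.mem_boundedBy_slotWords_pow (M : DFA A Q)
    (hρ : ∀ p x y w, M.evalFrom M.start x = p → M.evalFrom p y ∈ M.accept →
      M.evalFrom p w = p → w ∈ ({ρ p} : Language A)∗)
    (S : Finset Q) {p : Q} {x u : List A} (hx : M.evalFrom M.start x = p)
    (hu : M.evalFrom p u ∈ M.accept) (hS : ∀ v, v <+: u → M.evalFrom p v ∈ S) :
    u ∈ boundedBy (slotWords ρ) ^ S.card := by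
  classical
  induction S using Finset.strongInduction generalizing p x u with
  | H S ih =>
  have hpS : p ∈ S := hS [] nil_prefix
  rw [← Finset.card_erase_add_one hpS, pow_succ']
  obtain ⟨v, w, rfl, hv, hw⟩ := M.exists_eq_loop_append_avoiding p u
  have hvρ := hρ p x (v ++ w) v hx hu hv
  cases w with
  | nil =>
    exact append_mem_mul (mem_boundedBy_slotWords ρ hvρ) (one_le_pow₀ (one_le_boundedBy _) rfl)
  | cons a w =>
    have hrun : ∀ w', M.evalFrom (M.step p a) w' = M.evalFrom p (v ++ a :: w') := by
      simp [evalFrom_of_append, hv]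
    rw [← singleton_append, ← append_assoc]
    refine append_mem_mul (append_singleton_mem_boundedBy_slotWords ρ hvρ a)
      (ih _ (Finset.erase_ssubset hpS) (p := M.step p a) (x := x ++ (v ++ [a])) ?_ ?_ ?_)
    · simp [evalFrom_of_append, hx, hv]
    · rwa [hrun]
    · intro w' hw'
      rw [hrun, Finset.mem_erase]
      exact ⟨hw _ ((prefix_cons_inj a).2 hw') (cons_ne_nil _ _),
        hS _ ((prefix_append_right_inj v).2 ((prefix_cons_inj a).2 hw'))⟩

end Slots

end

/-- A regular language well-quasi-ordered by the infix relation
is bounded. -/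
theorem regular_wqo_infix_bounded
    {A : Type*} [Fintype A] (L : Set (List A))
    (hreg : IsRegularLang L) (hwqo : IsWqoOn L (· <:+: ·)) :
    IsBoundedLang L := by
  obtain ⟨Q, _, M, hM⟩ := hreg
  obtain rfl : (M.accepts : Set (List A)) = L := Set.ext hM
  choose ρ hρ using M.exists_loops_mem_kstar hwqo
  refine isBoundedLang_of_forall_mem_boundedBy
    (replicate (Fintype.card Q) (slotWords ρ)).flatten fun u hu => ?_
  rw [boundedBy_flatten_replicate, ← Finset.card_univ]
  exact M.mem_boundedBy_slotWords_pow ρ hρ Finset.univ (x := []) rfl hu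
    fun _ _ => Finset.mem_univ _
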